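/- Let (p,w) ∈ W and suppose the family ((λ'_s, p'_s, w'_s, a'_s)) indexed by s ∈ S is feasible at (p,w) and attains the supremum defining T(V*)(p,w). Then there exists another family ((λ_s, p_s, w_s, a_s)), feasible at (p,w) and also attaining the supremum defining T(V*)(p,w), in which there is at most one signal s ∈ S with λ_s > 0 and a_s = a*. -/

import Mathlib

noncomputable section

/-- Expected payoff of action `a` at belief `p` (= probability of state `ω₁`, encoded `true`). -/
def euP {A : Type*} (u : A → Bool → ℝ) (a : A) (p : ℝ) : ℝ :=
  (1 - p) * u a false + p * u a true

/-- The agent's best static payoff `m(p)` at belief `p`. -/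
def mFun {A : Type*} [Fintype A] [Nonempty A] (u : A → Bool → ℝ) (p : ℝ) : ℝ :=
  Finset.univ.sup' Finset.univ_nonempty (fun a => euP u a p)

/-- The agent's full-information payoff `M(p)` at belief `p`. -/
def MFun {A : Type*} [Fintype A] [Nonempty A] (u : A → Bool → ℝ) (p : ℝ) : ℝ :=
  (1 - p) * Finset.univ.sup' Finset.univ_nonempty (fun a => u a false)
    + p * Finset.univ.sup' Finset.univ_nonempty (fun a => u a true)

/-- The set `W` of pairs (belief, promised utility). -/
def Wset {A : Type*} [Fintype A] [Nonempty A] (u : A → Bool → ℝ) : Set (ℝ × ℝ) :=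
  {pw | pw.1 ∈ Set.Icc (0 : ℝ) 1 ∧ mFun u pw.1 ≤ pw.2 ∧ pw.2 ≤ MFun u pw.1}

/-- A family: for each signal a probability, a posterior belief, a promised continuation
utility, and a recommended action. -/
structure Fam (A S : Type*) where
  prob : S → ℝ
  belief : S → ℝ
  promise : S → ℝ
  act : S → A

/-- Feasibility of the family `f` at the point `pw = (p, w) ∈ W`. -/
def Feasible {A S : Type*} [Fintype A] [Nonempty A] [Fintype S]
    (u : A → Bool → ℝ) (δ : ℝ) (pw : ℝ × ℝ) (f : Fam A S) : Prop :=
  (∀ s, f.prob s ∈ Set.Icc (0 : ℝ) 1) ∧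
  (∀ s, (f.belief s, f.promise s) ∈ Wset u) ∧
  (∀ s, (1 - δ) * euP u (f.act s) (f.belief s) + δ * f.promise s ≥ mFun u (f.belief s)) ∧
  (∑ s, f.prob s * ((1 - δ) * euP u (f.act s) (f.belief s) + δ * f.promise s) ≥ pw.2) ∧
  (∑ s, f.prob s * f.belief s = pw.1) ∧
  (∑ s, f.prob s = 1)

/-- The principal's payoff from the family `f`, given continuation value function `V`. -/
def famPayoff {A S : Type*} [Fintype S] (v : A → Bool → ℝ) (δ : ℝ) (V : ℝ × ℝ → ℝ)
    (f : Fam A S) : ℝ :=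
  ∑ s, f.prob s * ((1 - δ) * euP v (f.act s) (f.belief s) + δ * V (f.belief s, f.promise s))

/-- The Bellman operator `T`. -/
def bellman {A S : Type*} [Fintype A] [Nonempty A] [Fintype S]
    (u v : A → Bool → ℝ) (δ : ℝ) (V : ℝ × ℝ → ℝ) (pw : ℝ × ℝ) : ℝ :=
  sSup {x | ∃ f : Fam A S, Feasible u δ pw f ∧ x = famPayoff v δ V f}

/-- `V` is bounded on `W`. -/
def BddOnW {A : Type*} [Fintype A] [Nonempty A] (u : A → Bool → ℝ) (V : ℝ × ℝ → ℝ) : Prop :=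
  ∃ C : ℝ, ∀ pw ∈ Wset u, |V pw| ≤ C
/-!
Pooling all signals that recommend the same action into a single signal, with the averaged
posterior and the averaged promise, keeps a family feasible: `u(a, ·)` is affine, `m` is convex
and `W` is convex. It costs the principal at most `δ` times the Jensen gap of the continuation
value, so everything rests on the concavity of `V*` on `W`. For that, near-optimal families at
finitely many points `qᵢ` mix into a feasible family at their average; pooling it back onto `S`
(possible since `|A| ≤ |S|`) and using `V* = T V*` shows that the largest Jensen gap `D` of `V*`
satisfies `D ≤ δ D`, hence `D ≤ 0`. Pooling the given optimal family then loses nothing, and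
afterwards every action, `a*` in particular, is recommended by at most one signal of positive
probability.
-/

open Finset Function

section Payoffs

variable {A ι : Type*} [Fintype ι]

lemma euP_sum_mul (φ : A → Bool → ℝ) (a : A) (μ p : ι → ℝ) (h1 : ∑ i, μ i = 1) :
    euP φ a (∑ i, μ i * p i) = ∑ i, μ i * euP φ a (p i) := by
  have h : ∀ i, μ i * euP φ a (p i) = μ i * φ a false + μ i * p i * (φ a true - φ a false) :=
    fun i => by unfold euP; ring
  simp only [h, sum_add_distrib, ← sum_mul, h1]
  unfold euP
  ring

variable [Fintype A]

lemma euP_le_sum_abs (v : A → Bool → ℝ) (a : A) {p : ℝ} (hp : p ∈ Set.Icc (0 : ℝ) 1) :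
    euP v a p ≤ ∑ b, (|v b false| + |v b true|) := by
  refine le_trans ?_ (single_le_sum (f := fun b => |v b false| + |v b true|)
    (fun b _ => by positivity) (mem_univ a))
  unfold euP
  nlinarith [hp.1, hp.2, le_abs_self (v a false), le_abs_self (v a true),
    abs_nonneg (v a false), abs_nonneg (v a true)]

variable [Nonempty A]

lemma euP_le_mFun (u : A → Bool → ℝ) (a : A) (p : ℝ) : euP u a p ≤ mFun u p :=
  le_sup' (fun a => euP u a p) (mem_univ a)

lemma exists_euP_eq_mFun (u : A → Bool → ℝ) (p : ℝ) : ∃ a, euP u a p = mFun u p := by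
  obtain ⟨a, -, ha⟩ := exists_mem_eq_sup' univ_nonempty (fun a => euP u a p)
  exact ⟨a, ha.symm⟩

lemma MFun_eq (u : A → Bool → ℝ) (p : ℝ) : MFun u p = (1 - p) * mFun u 0 + p * mFun u 1 := by
  simp [MFun, mFun, euP]

lemma convexOn_mFun (u : A → Bool → ℝ) : ConvexOn ℝ Set.univ (mFun u) := by
  refine ⟨convex_univ, fun x _ y _ a b ha hb hab => sup'_le _ _ fun c _ => ?_⟩
  calc euP u c (a • x + b • y) = a * euP u c x + b * euP u c y := by
        unfold euP; simp only [smul_eq_mul]; linear_combination (-u c false) * hab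
    _ ≤ a • mFun u x + b • mFun u y := by
        simp only [smul_eq_mul]; gcongr <;> exact euP_le_mFun u c _

lemma concaveOn_MFun (u : A → Bool → ℝ) : ConcaveOn ℝ Set.univ (MFun u) := by
  refine ⟨convex_univ, fun x _ y _ a b _ _ hab => le_of_eq ?_⟩
  simp only [MFun_eq, smul_eq_mul]
  linear_combination (mFun u 0) * hab

lemma convex_Wset (u : A → Bool → ℝ) : Convex ℝ (Wset u) := by
  have hm := ((convexOn_mFun u).subset (Set.subset_univ _) (convex_Icc 0 1)).convex_epigraph
  have hM := ((concaveOn_MFun u).subset (Set.subset_univ _) (convex_Icc 0 1)).convex_hypograph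
  convert hm.inter hM using 1
  ext ⟨p, w⟩
  simp only [Wset, Set.mem_ofPred_eq, Set.mem_inter_iff]
  tauto

lemma mk_mFun_mem_Wset (u : A → Bool → ℝ) {p : ℝ} (hp : p = 0 ∨ p = 1) :
    (p, mFun u p) ∈ Wset u := by
  refine ⟨⟨?_, ?_⟩, le_rfl, le_of_eq ?_⟩ <;> rcases hp with rfl | rfl <;> simp [MFun_eq]

end Payoffs

lemma sum_smul_mk {ι : Type*} [Fintype ι] (μ x y : ι → ℝ) :
    ∑ i, μ i • (x i, y i) = (∑ i, μ i * x i, ∑ i, μ i * y i) := by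
  ext <;> simp [Prod.fst_sum, Prod.snd_sum]

namespace Fam

variable {A ι : Type*}

def agentValue (u : A → Bool → ℝ) (δ : ℝ) (f : Fam A ι) (s : ι) : ℝ :=
  (1 - δ) * euP u (f.act s) (f.belief s) + δ * f.promise s

def principalValue (v : A → Bool → ℝ) (δ : ℝ) (V : ℝ × ℝ → ℝ) (f : Fam A ι) (s : ι) : ℝ :=
  (1 - δ) * euP v (f.act s) (f.belief s) + δ * V (f.belief s, f.promise s)

end Fam

section Feasible

variable {A ι : Type*} [Fintype A] [Nonempty A] [Fintype ι]
  {u v : A → Bool → ℝ} {δ : ℝ} {V : ℝ × ℝ → ℝ} {pw : ℝ × ℝ} {f : Fam A ι}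

omit [Fintype A] [Nonempty A] in
lemma famPayoff_eq_sum_principalValue :
    famPayoff v δ V f = ∑ s, f.prob s * f.principalValue v δ V s := rfl

lemma feasible_iff : Feasible u δ pw f ↔
    (∀ s, 0 ≤ f.prob s) ∧ (∀ s, (f.belief s, f.promise s) ∈ Wset u) ∧
    (∀ s, mFun u (f.belief s) ≤ f.agentValue u δ s) ∧
    pw.2 ≤ ∑ s, f.prob s * f.agentValue u δ s ∧
    ∑ s, f.prob s * f.belief s = pw.1 ∧ ∑ s, f.prob s = 1 := by
  refine ⟨fun ⟨hp, hW, hIC, hval, hbel, htot⟩ => ⟨fun s => (hp s).1, hW, hIC, hval, hbel, htot⟩,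
    fun ⟨hp, hW, hIC, hval, hbel, htot⟩ => ⟨fun s => ⟨hp s, ?_⟩, hW, hIC, hval, hbel, htot⟩⟩
  exact htot ▸ single_le_sum (fun s _ => hp s) (mem_univ s)

lemma Feasible.nonempty (hf : Feasible u δ pw f) : Nonempty ι := by
  by_contra h
  have := (feasible_iff.1 hf).2.2.2.2.2
  simp [not_nonempty_iff.1 h] at this

lemma Feasible.famPayoff_le (hδ0 : 0 ≤ δ) (hδ1 : δ ≤ 1) {C : ℝ} (hC : ∀ q ∈ Wset u, |V q| ≤ C)
    (hf : Feasible u δ pw f) :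
    famPayoff v δ V f ≤ (1 - δ) * ∑ a, (|v a false| + |v a true|) + δ * C := by
  obtain ⟨hp, hW, -, -, -, htot⟩ := feasible_iff.1 hf
  have hs : ∀ s, f.principalValue v δ V s ≤ (1 - δ) * ∑ a, (|v a false| + |v a true|) + δ * C :=
    fun s => add_le_add (mul_le_mul_of_nonneg_left (euP_le_sum_abs v _ (hW s).1) (by linarith))
      (mul_le_mul_of_nonneg_left (abs_le.1 (hC _ (hW s))).2 hδ0)
  calc famPayoff v δ V f ≤ ∑ s, f.prob s * ((1 - δ) * ∑ a, (|v a false| + |v a true|) + δ * C) :=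
        sum_le_sum fun s _ => mul_le_mul_of_nonneg_left (hs s) (hp s)
    _ = _ := by rw [← sum_mul, htot, one_mul]

end Feasible

section Bellman

variable {A S : Type*} [Fintype A] [Nonempty A] [Fintype S]
  {u v : A → Bool → ℝ} {δ : ℝ} {V : ℝ × ℝ → ℝ} {pw : ℝ × ℝ}

/-- Full disclosure: reveal the state and promise the agent his static optimum. -/
lemma exists_feasible (hS : 2 ≤ Fintype.card S) (hpw : pw ∈ Wset u) :
    ∃ f : Fam A S, Feasible u δ pw f := by
  classical
  obtain ⟨s₀, s₁, hne⟩ := Fintype.exists_pair_of_one_lt_card hS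
  choose best hbest using exists_euP_eq_mFun u
  obtain ⟨⟨hp0, hp1⟩, -, hwM⟩ := hpw
  let b : S → ℝ := fun s => if s = s₁ then 1 else 0
  refine ⟨⟨Pi.single s₀ (1 - pw.1) + Pi.single s₁ pw.1, b, fun s => mFun u (b s),
    fun s => best (b s)⟩, feasible_iff.2 ⟨fun s => ?_, fun s => ?_, fun s => ?_, ?_, ?_, ?_⟩⟩
  · simp only [Pi.add_apply, Pi.single_apply]; split_ifs <;> linarith
  · exact mk_mFun_mem_Wset u (by by_cases h : s = s₁ <;> simp [b, h])
  · simp only [Fam.agentValue, hbest]; linarith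
  · simp only [Fam.agentValue, hbest, Pi.add_apply, Pi.single_apply, add_mul, ite_mul, zero_mul,
      sum_add_distrib, sum_ite_eq', mem_univ, if_true, b, if_neg hne]
    rw [MFun_eq] at hwM
    linear_combination hwM
  · simp [b, Pi.single_apply, hne.symm]
  · simp [sum_add_distrib]

lemma bddAbove_famPayoff (hδ0 : 0 ≤ δ) (hδ1 : δ ≤ 1) (hVb : BddOnW u V) (pw : ℝ × ℝ) :
    BddAbove {x | ∃ f : Fam A S, Feasible u δ pw f ∧ x = famPayoff v δ V f} := by
  obtain ⟨C, hC⟩ := hVb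
  refine ⟨(1 - δ) * ∑ a, (|v a false| + |v a true|) + δ * C, ?_⟩
  rintro _ ⟨f, hf, rfl⟩
  exact hf.famPayoff_le hδ0 hδ1 hC

lemma Feasible.famPayoff_le_bellman (hδ0 : 0 ≤ δ) (hδ1 : δ ≤ 1) (hVb : BddOnW u V)
    {f : Fam A S} (hf : Feasible u δ pw f) :
    famPayoff v δ V f ≤ bellman (S := S) u v δ V pw :=
  le_csSup (bddAbove_famPayoff hδ0 hδ1 hVb pw) ⟨f, hf, rfl⟩

lemma exists_feasible_lt_famPayoff (hS : 2 ≤ Fintype.card S) (hpw : pw ∈ Wset u) {ε : ℝ}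
    (hε : 0 < ε) :
    ∃ f : Fam A S, Feasible u δ pw f ∧ bellman (S := S) u v δ V pw - ε < famPayoff v δ V f := by
  obtain ⟨f₀, hf₀⟩ := exists_feasible (δ := δ) hS hpw
  obtain ⟨_, ⟨f, hf, rfl⟩, hlt⟩ := exists_lt_of_lt_csSup
    (⟨_, f₀, hf₀, rfl⟩ : {x | ∃ f : Fam A S, Feasible u δ pw f ∧ x = famPayoff v δ V f}.Nonempty)
    (sub_lt_self (bellman (S := S) u v δ V pw) hε)
  exact ⟨f, hf, hlt⟩

end Bellman

namespace Fam

variable {A ι κ : Type*} [Fintype ι] [DecidableEq κ]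

def fiberMass (g : Fam A ι) (ℓ : ι → κ) (k : κ) : ℝ := ∑ i, if ℓ i = k then g.prob i else 0

variable {g : Fam A ι} {ℓ : ι → κ}

lemma sum_fiberMass [Fintype κ] : ∑ k, g.fiberMass ℓ k = ∑ i, g.prob i := by
  simp only [fiberMass]
  rw [sum_comm]
  simp

lemma fiberMass_nonneg (hp : ∀ i, 0 ≤ g.prob i) (k : κ) : 0 ≤ g.fiberMass ℓ k :=
  sum_nonneg fun i _ => ite_nonneg (hp i) le_rfl

lemma prob_eq_zero_of_fiberMass_eq_zero (hp : ∀ i, 0 ≤ g.prob i) {k : κ}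
    (hk : g.fiberMass ℓ k = 0) {i : ι} (hi : ℓ i = k) : g.prob i = 0 := by
  simpa [hi] using (sum_eq_zero_iff_of_nonneg fun j _ => ite_nonneg (hp j) le_rfl).1 hk i
    (mem_univ i)

lemma exists_eq_of_fiberMass_pos {k : κ} (hk : 0 < g.fiberMass ℓ k) : ∃ i, ℓ i = k := by
  by_contra h
  simp [fiberMass, not_exists.1 h] at hk

variable [Nonempty ι] [DecidableEq ι]

variable (g ℓ) in
/-- The conditional law of the signal of `g` given its label `k`; for a null label it is the
point mass at `invFun ℓ k`, which carries the label `k` whenever some signal does. -/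
def condWeight (k : κ) (i : ι) : ℝ :=
  if 0 < g.fiberMass ℓ k then (if ℓ i = k then g.prob i else 0) / g.fiberMass ℓ k
  else (Pi.single (invFun ℓ k) 1 : ι → ℝ) i

variable (g ℓ) in
@[simps]
def pool : Fam A κ where
  prob := g.fiberMass ℓ
  belief k := ∑ i, g.condWeight ℓ k i * g.belief i
  promise k := ∑ i, g.condWeight ℓ k i * g.promise i
  act k := g.act (invFun ℓ k)

lemma sum_condWeight (k : κ) : ∑ i, g.condWeight ℓ k i = 1 := by
  by_cases hk : 0 < g.fiberMass ℓ k
  · simp only [condWeight, if_pos hk, ← sum_div]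
    exact div_self hk.ne'
  · simp [condWeight, if_neg hk]

lemma condWeight_nonneg (hp : ∀ i, 0 ≤ g.prob i) (k : κ) (i : ι) : 0 ≤ g.condWeight ℓ k i := by
  by_cases hk : 0 < g.fiberMass ℓ k
  · simp only [condWeight, if_pos hk]
    exact div_nonneg (ite_nonneg (hp i) le_rfl) hk.le
  · simp only [condWeight, if_neg hk, Pi.single_apply]
    split_ifs <;> norm_num

lemma fiberMass_mul_condWeight (hp : ∀ i, 0 ≤ g.prob i) (k : κ) (i : ι) :
    g.fiberMass ℓ k * g.condWeight ℓ k i = if ℓ i = k then g.prob i else 0 := by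
  by_cases hk : 0 < g.fiberMass ℓ k
  · rw [condWeight, if_pos hk, mul_div_cancel₀ _ hk.ne']
  · have h0 : g.fiberMass ℓ k = 0 := le_antisymm (not_lt.1 hk) (fiberMass_nonneg hp k)
    rw [h0, zero_mul]
    split_ifs with hi
    · exact (prob_eq_zero_of_fiberMass_eq_zero hp h0 hi).symm
    · rfl

lemma sum_fiberMass_mul_sum_condWeight [Fintype κ] (hp : ∀ i, 0 ≤ g.prob i) (x : ι → ℝ) :
    ∑ k, g.fiberMass ℓ k * ∑ i, g.condWeight ℓ k i * x i = ∑ i, g.prob i * x i := by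
  simp_rw [mul_sum, ← mul_assoc, fiberMass_mul_condWeight hp, ite_mul, zero_mul]
  rw [sum_comm]
  simp

lemma act_eq_pool_act (hℓ : ∀ i j, ℓ i = ℓ j → g.act i = g.act j) {k : κ} {i : ι}
    (hi : g.condWeight ℓ k i ≠ 0) : g.act i = (g.pool ℓ).act k := by
  by_cases hk : 0 < g.fiberMass ℓ k
  · have hik : ℓ i = k := by
      by_contra h
      simp [condWeight, hk, h] at hi
    exact hℓ _ _ (hik.trans (invFun_eq ⟨i, hik⟩).symm)
  · have : i = invFun ℓ k := by
      by_contra h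
      simp [condWeight, hk, h] at hi
    rw [this, pool_act]

lemma euP_pool (φ : A → Bool → ℝ) (hℓ : ∀ i j, ℓ i = ℓ j → g.act i = g.act j) (k : κ) :
    euP φ ((g.pool ℓ).act k) ((g.pool ℓ).belief k)
      = ∑ i, g.condWeight ℓ k i * euP φ (g.act i) (g.belief i) := by
  rw [pool_belief, euP_sum_mul φ _ _ _ (sum_condWeight k)]
  refine sum_congr rfl fun i _ => ?_
  by_cases hi : g.condWeight ℓ k i = 0
  · simp [hi]
  · rw [act_eq_pool_act hℓ hi]

lemma agentValue_pool (u : A → Bool → ℝ) (δ : ℝ) (hℓ : ∀ i j, ℓ i = ℓ j → g.act i = g.act j)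
    (k : κ) : (g.pool ℓ).agentValue u δ k = ∑ i, g.condWeight ℓ k i * g.agentValue u δ i := by
  rw [agentValue, euP_pool u hℓ, pool_promise, mul_sum, mul_sum, ← sum_add_distrib]
  exact sum_congr rfl fun i _ => by rw [agentValue]; ring

end Fam

def jensenGap {ι : Type*} [Fintype ι] (V : ℝ × ℝ → ℝ) (μ : ι → ℝ) (q : ι → ℝ × ℝ) : ℝ :=
  ∑ i, μ i * V (q i) - V (∑ i, μ i • q i)

def JensenGapLE (ι : Type*) [Fintype ι] {A : Type*} [Fintype A] [Nonempty A]
    (u : A → Bool → ℝ) (V : ℝ × ℝ → ℝ) (D : ℝ) : Prop :=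
  ∀ (μ : ι → ℝ) (q : ι → ℝ × ℝ), (∀ i, 0 ≤ μ i) → ∑ i, μ i = 1 → (∀ i, q i ∈ Wset u) →
    jensenGap V μ q ≤ D

lemma ConcaveOn.jensenGapLE_zero {A : Type*} [Fintype A] [Nonempty A] {u : A → Bool → ℝ}
    {V : ℝ × ℝ → ℝ} (hV : ConcaveOn ℝ (Wset u) V) (ι : Type*) [Fintype ι] :
    JensenGapLE ι u V 0 := fun _ _ hμ h1 hq =>
  sub_nonpos.2 <| by
    simpa only [smul_eq_mul] using hV.le_map_sum (fun i _ => hμ i) h1 fun i _ => hq i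

section Pooling

variable {A ι κ : Type*} [Fintype A] [Nonempty A] [Fintype ι] [Nonempty ι] [DecidableEq ι]
  [Fintype κ] [DecidableEq κ] {u v : A → Bool → ℝ} {δ D : ℝ} {V : ℝ × ℝ → ℝ} {pw : ℝ × ℝ}
  {g : Fam A ι} {ℓ : ι → κ}

lemma Feasible.pool (hg : Feasible u δ pw g) (hℓ : ∀ i j, ℓ i = ℓ j → g.act i = g.act j) :
    Feasible u δ pw (g.pool ℓ) := by
  obtain ⟨hp, hW, hIC, hval, hbel, htot⟩ := feasible_iff.1 hg
  have hμ := Fam.condWeight_nonneg (ℓ := ℓ) hp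
  refine feasible_iff.2 ⟨Fam.fiberMass_nonneg hp, fun k => ?_, fun k => ?_, ?_, ?_, ?_⟩
  · rw [Fam.pool_belief, Fam.pool_promise, ← sum_smul_mk]
    exact (convex_Wset u).sum_mem (fun i _ => hμ k i) (Fam.sum_condWeight k) fun i _ => hW i
  · rw [Fam.agentValue_pool u δ hℓ]
    calc mFun u (∑ i, g.condWeight ℓ k i * g.belief i)
        ≤ ∑ i, g.condWeight ℓ k i * mFun u (g.belief i) := by
          simpa only [smul_eq_mul] using (convexOn_mFun u).map_sum_le (fun i _ => hμ k i)
            (Fam.sum_condWeight k) fun i _ => Set.mem_univ _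
      _ ≤ _ := sum_le_sum fun i _ => mul_le_mul_of_nonneg_left (hIC i) (hμ k i)
  · simpa only [Fam.pool_prob, Fam.agentValue_pool u δ hℓ, Fam.sum_fiberMass_mul_sum_condWeight hp]
  · exact (Fam.sum_fiberMass_mul_sum_condWeight hp _).trans hbel
  · exact Fam.sum_fiberMass.trans htot

lemma Feasible.famPayoff_sub_le_pool (hg : Feasible u δ pw g)
    (hℓ : ∀ i j, ℓ i = ℓ j → g.act i = g.act j) (hδ : 0 ≤ δ)
    (hD : JensenGapLE ι u V D) :
    famPayoff v δ V g - δ * D ≤ famPayoff v δ V (g.pool ℓ) := by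
  obtain ⟨hp, hW, -, -, -, htot⟩ := feasible_iff.1 hg
  have hμ := Fam.condWeight_nonneg (ℓ := ℓ) hp
  have hsignal : ∀ k, ∑ i, g.condWeight ℓ k i * g.principalValue v δ V i - δ * D
      ≤ (g.pool ℓ).principalValue v δ V k := by
    intro k
    have hgap := hD (g.condWeight ℓ k) (fun i => (g.belief i, g.promise i)) (hμ k)
      (Fam.sum_condWeight k) hW
    rw [jensenGap, sum_smul_mk] at hgap
    rw [Fam.principalValue, Fam.euP_pool v hℓ]
    simp only [Fam.principalValue, mul_add, sum_add_distrib, Fam.pool_belief, Fam.pool_promise]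
    simp only [mul_left_comm _ (1 - δ), mul_left_comm _ δ, ← mul_sum]
    linarith [mul_le_mul_of_nonneg_left hgap hδ]
  calc famPayoff v δ V g - δ * D
      = ∑ k, g.fiberMass ℓ k * (∑ i, g.condWeight ℓ k i * g.principalValue v δ V i - δ * D) := by
        rw [famPayoff_eq_sum_principalValue, ← Fam.sum_fiberMass_mul_sum_condWeight (ℓ := ℓ) hp]
        simp only [mul_sub, sum_sub_distrib, ← sum_mul, Fam.sum_fiberMass, htot, one_mul]
    _ ≤ famPayoff v δ V (g.pool ℓ) :=
        sum_le_sum fun k _ => mul_le_mul_of_nonneg_left (hsignal k) (Fam.fiberMass_nonneg hp k)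

end Pooling

lemma Feasible.exists_pool_embedding {A ι S : Type*} [Fintype A] [Nonempty A] [Fintype ι]
    [Fintype S] {u v : A → Bool → ℝ} {δ D : ℝ} {V : ℝ × ℝ → ℝ} {pw : ℝ × ℝ} {g : Fam A ι}
    (hg : Feasible u δ pw g) (e : A ↪ S) (hδ : 0 ≤ δ)
    (hD : JensenGapLE ι u V D) :
    ∃ h : Fam A S, Feasible u δ pw h ∧ famPayoff v δ V g - δ * D ≤ famPayoff v δ V h ∧
      ∀ s, 0 < h.prob s → e (h.act s) = s := by
  classical
  have := hg.nonempty
  have hℓ : ∀ i j, e (g.act i) = e (g.act j) → g.act i = g.act j := fun _ _ h => e.injective h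
  exact ⟨g.pool (e ∘ g.act), hg.pool hℓ, hg.famPayoff_sub_le_pool hℓ hδ hD,
    fun _ hs => invFun_eq (Fam.exists_eq_of_fiberMass_pos hs)⟩

namespace Fam

variable {A ι κ : Type*}

def mix (μ : ι → ℝ) (F : ι → Fam A κ) : Fam A (ι × κ) where
  prob x := μ x.1 * (F x.1).prob x.2
  belief x := (F x.1).belief x.2
  promise x := (F x.1).promise x.2
  act x := (F x.1).act x.2

lemma sum_mix_prob_mul [Fintype ι] [Fintype κ] (μ : ι → ℝ) (F : ι → Fam A κ)
    (y : ι × κ → ℝ) :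
    ∑ x, (mix μ F).prob x * y x = ∑ i, μ i * ∑ k, (F i).prob k * y (i, k) := by
  simp only [mix, Fintype.sum_prod_type, mul_sum, mul_assoc]

lemma famPayoff_mix [Fintype ι] [Fintype κ] (v : A → Bool → ℝ) (δ : ℝ) (V : ℝ × ℝ → ℝ)
    (μ : ι → ℝ) (F : ι → Fam A κ) :
    famPayoff v δ V (mix μ F) = ∑ i, μ i * famPayoff v δ V (F i) :=
  sum_mix_prob_mul μ F _

end Fam

lemma feasible_mix {A ι S : Type*} [Fintype A] [Nonempty A] [Fintype ι] [Fintype S]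
    {u : A → Bool → ℝ} {δ : ℝ} {μ : ι → ℝ} {q : ι → ℝ × ℝ} {F : ι → Fam A S}
    (hμ : ∀ i, 0 ≤ μ i) (h1 : ∑ i, μ i = 1) (hF : ∀ i, Feasible u δ (q i) (F i)) :
    Feasible u δ (∑ i, μ i • q i) (Fam.mix μ F) := by
  choose hp hW hIC hval hbel htot using fun i => feasible_iff.1 (hF i)
  refine feasible_iff.2 ⟨fun x => mul_nonneg (hμ x.1) (hp x.1 x.2), fun x => hW x.1 x.2,
    fun x => hIC x.1 x.2, ?_, ?_, ?_⟩
  · rw [Fam.sum_mix_prob_mul, Prod.snd_sum]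
    exact sum_le_sum fun i _ => mul_le_mul_of_nonneg_left (hval i) (hμ i)
  · simp only [Fam.sum_mix_prob_mul, Prod.fst_sum, Prod.smul_fst, smul_eq_mul]
    exact sum_congr rfl fun i _ => by rw [← hbel i]; rfl
  · simpa only [mul_one, htot, h1] using Fam.sum_mix_prob_mul μ F fun _ => 1

section JensenGaps

variable {A : Type*} [Fintype A] [Nonempty A] {u : A → Bool → ℝ} {V : ℝ × ℝ → ℝ}

def jensenGaps (u : A → Bool → ℝ) (V : ℝ × ℝ → ℝ) : Set ℝ :=
  {x | ∃ (n : ℕ) (μ : Fin n → ℝ) (q : Fin n → ℝ × ℝ),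
    (∀ i, 0 ≤ μ i) ∧ ∑ i, μ i = 1 ∧ (∀ i, q i ∈ Wset u) ∧ jensenGap V μ q = x}

lemma jensenGap_mem_jensenGaps {ι : Type*} [Fintype ι] (μ : ι → ℝ) (q : ι → ℝ × ℝ)
    (hμ : ∀ i, 0 ≤ μ i) (h1 : ∑ i, μ i = 1) (hq : ∀ i, q i ∈ Wset u) :
    jensenGap V μ q ∈ jensenGaps u V := by
  let e := (Fintype.equivFin ι).symm
  refine ⟨_, μ ∘ e, q ∘ e, fun _ => hμ _, (e.sum_comp μ).trans h1, fun _ => hq _, ?_⟩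
  simp only [jensenGap, comp_apply, e.sum_comp fun i => μ i * V (q i),
    e.sum_comp fun i => μ i • q i]

lemma zero_mem_jensenGaps : (0 : ℝ) ∈ jensenGaps u V := by
  simpa [jensenGap] using jensenGap_mem_jensenGaps (u := u) (V := V) (fun _ : Unit => 1)
    (fun _ => (0, mFun u 0)) (fun _ => zero_le_one) (by simp)
    (fun _ => mk_mFun_mem_Wset u (Or.inl rfl))

lemma bddAbove_jensenGaps (hVb : BddOnW u V) : BddAbove (jensenGaps u V) := by
  obtain ⟨C, hC⟩ := hVb
  refine ⟨2 * C, ?_⟩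
  rintro _ ⟨n, μ, q, hμ, h1, hq, rfl⟩
  have hsum : ∑ i, μ i * V (q i) ≤ C :=
    calc ∑ i, μ i * V (q i) ≤ ∑ i, μ i * C :=
          sum_le_sum fun i _ => mul_le_mul_of_nonneg_left (abs_le.1 (hC _ (hq i))).2 (hμ i)
      _ = C := by rw [← sum_mul, h1, one_mul]
  have hbar := (abs_le.1 (hC _ ((convex_Wset u).sum_mem (fun i _ => hμ i) h1 fun i _ => hq i))).1
  unfold jensenGap
  linarith

lemma jensenGapLE_sSup (ι : Type*) [Fintype ι] (hVb : BddOnW u V) :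
    JensenGapLE ι u V (sSup (jensenGaps u V)) := fun μ q hμ h1 hq =>
  le_csSup (bddAbove_jensenGaps hVb) (jensenGap_mem_jensenGaps μ q hμ h1 hq)

end JensenGaps

section Concavity

variable {A S : Type*} [Fintype A] [Nonempty A] [Fintype S]
  {u v : A → Bool → ℝ} {δ : ℝ} {V : ℝ × ℝ → ℝ}

lemma jensenGap_le_of_bellman_fixed {ι : Type*} [Fintype ι] (hδ0 : 0 ≤ δ) (hδ1 : δ ≤ 1)
    (hS : 2 ≤ Fintype.card S) (e : A ↪ S) (hVb : BddOnW u V)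
    (hVfix : ∀ pw ∈ Wset u, bellman (S := S) u v δ V pw = V pw) {D : ℝ}
    (hD : JensenGapLE (ι × S) u V D)
    (μ : ι → ℝ) (q : ι → ℝ × ℝ) (hμ : ∀ i, 0 ≤ μ i) (h1 : ∑ i, μ i = 1)
    (hq : ∀ i, q i ∈ Wset u) {ε : ℝ} (hε : 0 < ε) :
    jensenGap V μ q ≤ δ * D + ε := by
  choose F hF hFpay using fun i => exists_feasible_lt_famPayoff (v := v) (V := V) hS (hq i) hε
  obtain ⟨h, hh, hpay, -⟩ := (feasible_mix hμ h1 hF).exists_pool_embedding (v := v) e hδ0 hD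
  have hle := hh.famPayoff_le_bellman (v := v) hδ0 hδ1 hVb
  rw [hVfix _ ((convex_Wset u).sum_mem (fun i _ => hμ i) h1 fun i _ => hq i)] at hle
  rw [Fam.famPayoff_mix] at hpay
  have happrox : ∑ i, μ i * V (q i) - ε ≤ ∑ i, μ i * famPayoff v δ V (F i) :=
    calc ∑ i, μ i * V (q i) - ε = ∑ i, μ i * (V (q i) - ε) := by
          simp only [mul_sub, sum_sub_distrib, ← sum_mul, h1, one_mul]
      _ ≤ _ := sum_le_sum fun i _ => mul_le_mul_of_nonneg_left
          (by linarith [hFpay i, hVfix _ (hq i)]) (hμ i)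
  unfold jensenGap
  linarith

theorem concaveOn_of_bellman_fixed (hδ0 : 0 ≤ δ) (hδ1 : δ < 1) (hS : 2 ≤ Fintype.card S)
    (e : A ↪ S) (hVb : BddOnW u V)
    (hVfix : ∀ pw ∈ Wset u, bellman (S := S) u v δ V pw = V pw) :
    ConcaveOn ℝ (Wset u) V := by
  have hcontract : ∀ ε, 0 < ε → sSup (jensenGaps u V) ≤ δ * sSup (jensenGaps u V) + ε :=
    fun ε hε => csSup_le ⟨0, zero_mem_jensenGaps⟩ <| by
      rintro _ ⟨n, μ, q, hμ, h1, hq, rfl⟩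
      exact jensenGap_le_of_bellman_fixed hδ0 hδ1.le hS e hVb hVfix (jensenGapLE_sSup _ hVb)
        μ q hμ h1 hq hε
  have hD : sSup (jensenGaps u V) ≤ 0 := by
    nlinarith [le_of_forall_pos_le_add hcontract]
  refine ⟨convex_Wset u, fun x hx y hy a b ha hb hab => ?_⟩
  have := (jensenGapLE_sSup (Fin 2) hVb ![a, b] ![x, y] (Fin.forall_fin_two.2 ⟨ha, hb⟩)
    (by simpa using hab) (Fin.forall_fin_two.2 ⟨hx, hy⟩)).trans hD
  simpa [jensenGap, sub_nonpos] using this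

end Concavity

theorem optimal_family_single_astar_signal_general
    {A S : Type*} [Fintype A] [Nonempty A] [Fintype S]
    (u v : A → Bool → ℝ) (δ : ℝ) (astar : A)
    (hδ : δ ∈ Set.Ioo (0 : ℝ) 1)
    (hS2 : 2 ≤ Fintype.card S) (hAS : Fintype.card A ≤ Fintype.card S)
    (Vstar : ℝ × ℝ → ℝ) (hVb : BddOnW u Vstar)
    (hVfix : ∀ pw ∈ Wset u, bellman (S := S) u v δ Vstar pw = Vstar pw)
    (pw : ℝ × ℝ) (f' : Fam A S)
    (hfeas : Feasible u δ pw f')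
    (hopt : famPayoff v δ Vstar f' = bellman (S := S) u v δ Vstar pw) :
    ∃ f : Fam A S, Feasible u δ pw f ∧
      famPayoff v δ Vstar f = bellman (S := S) u v δ Vstar pw ∧
      ∀ s s' : S, (0 < f.prob s ∧ f.act s = astar) → (0 < f.prob s' ∧ f.act s' = astar) →
        s = s' := by
  obtain ⟨e⟩ : Nonempty (A ↪ S) := Function.Embedding.nonempty_iff_card_le.2 hAS
  have hconc := concaveOn_of_bellman_fixed hδ.1.le hδ.2 hS2 e hVb hVfix
  obtain ⟨f, hf, hpay, hlabel⟩ :=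
    hfeas.exists_pool_embedding (v := v) e hδ.1.le (hconc.jensenGapLE_zero S)
  refine ⟨f, hf, le_antisymm (hf.famPayoff_le_bellman hδ.1.le hδ.2.le hVb) ?_, ?_⟩
  · linarith
  · rintro s s' ⟨hs, has⟩ ⟨hs', has'⟩
    rw [← hlabel s hs, ← hlabel s' hs', has, has']

/-- from any optimal family one can construct another optimal family in
which at most one signal with positive probability recommends `a*`. -/
theorem optimal_family_single_astar_signal
    {A S : Type*} [Fintype A] [Nonempty A] [Fintype S]
    (u v : A → Bool → ℝ) (δ : ℝ) (astar : A)
    (hδ : δ ∈ Set.Ioo (0 : ℝ) 1)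
    (hS2 : 2 ≤ Fintype.card S) (hAS : Fintype.card A ≤ Fintype.card S)
    (hv0 : 0 < v astar false) (hv1 : 0 < v astar true)
    (hvz : ∀ a : A, a ≠ astar → v a false = 0 ∧ v a true = 0)
    (Vstar : ℝ × ℝ → ℝ) (hVb : BddOnW u Vstar)
    (hVfix : ∀ pw ∈ Wset u, bellman (S := S) u v δ Vstar pw = Vstar pw)
    (pw : ℝ × ℝ) (hpw : pw ∈ Wset u) (f' : Fam A S)
    (hfeas : Feasible u δ pw f')
    (hopt : famPayoff v δ Vstar f' = bellman (S := S) u v δ Vstar pw) :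
    ∃ f : Fam A S, Feasible u δ pw f ∧
      famPayoff v δ Vstar f = bellman (S := S) u v δ Vstar pw ∧
      ∀ s s' : S, (0 < f.prob s ∧ f.act s = astar) → (0 < f.prob s' ∧ f.act s' = astar) →
        s = s' :=
  optimal_family_single_astar_signal_general u v δ astar hδ hS2 hAS Vstar hVb hVfix pw f' hfeas hopt
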